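/- Let (G,t) be a topological abelian group with character group G' = (G,t)^. The following are equivalent: (1) every k-continuous group homomorphism from (G,t) to 𝕋 (i.e. continuous on each t-compact subset of G) is continuous; (2) the group of continuous characters of (G, k_g[t]) equals G'; (3) the Bohr topology of (G, k_g[t]) equals the Bohr topology of (G,t), i.e. k_g[t]⁺ = t⁺; (4) there exists a k_g-group topology τ on G with t ⊆ τ and τ⁺ = t⁺. -/

import Mathlib

open Filter Topology Pointwise

noncomputable section

/-- The circle group `𝕋 = ℝ/ℤ`. -/
abbrev Circle1 : Type := AddCircle (1 : ℝ)

variable {G : Type*}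

/-- The Bohr topology associated to a group topology `t`: the initial topology induced by
all `t`-continuous homomorphisms into the circle. -/
def bohr [AddCommGroup G] (t : TopologicalSpace G) : TopologicalSpace G :=
  ⨅ (χ : G →+ Circle1) (_ : @Continuous G Circle1 t _ ⇑χ),
    TopologicalSpace.induced ⇑χ inferInstance

/-- A group topology is totally bounded if every neighborhood of `0` has finitely many
translates covering the group. -/
def TotallyBoundedGroup [AddCommGroup G] (w : TopologicalSpace G) : Prop :=
  ∀ U ∈ @nhds G w 0, ∃ F : Finset G, ∀ g : G, ∃ f ∈ F, g - f ∈ U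

/-- `(G,w)` is a Bohr group (a member of the class `𝓑`) if `w` is the Bohr topology of some
locally compact Hausdorff group topology on `G`. -/
def IsBohrGroup [AddCommGroup G] (w : TopologicalSpace G) : Prop :=
  ∃ τ : TopologicalSpace G, @IsTopologicalAddGroup G τ _ ∧ @LocallyCompactSpace G τ ∧
    @T2Space G τ ∧ bohr τ = w

/-- The group of `t`-continuous characters of `G`, as a subgroup of `G →+ 𝕋`. -/
def charSubgroup [AddCommGroup G] (t : TopologicalSpace G) : AddSubgroup (G →+ Circle1) where
  carrier := {χ : G →+ Circle1 | @Continuous G Circle1 t _ ⇑χ}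
  zero_mem' := by
    show @Continuous G Circle1 t _ ⇑(0 : G →+ Circle1)
    simp only [AddMonoidHom.zero_apply, show ⇑(0 : G →+ Circle1) = fun _ => (0:Circle1) from rfl]
    exact @continuous_const G Circle1 t _ 0
  add_mem' := by
    intro χ φ hχ hφ
    show @Continuous G Circle1 t _ ⇑(χ + φ)
    simp only [show ⇑(χ + φ) = fun x => χ x + φ x from rfl]
    exact hχ.add hφ
  neg_mem' := by
    intro χ hχ
    show @Continuous G Circle1 t _ ⇑(-χ)
    simp only [show ⇑(-χ) = fun x => -(χ x) from rfl]
    exact hχ.neg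

/-- The compact-open topology on the character group of `(G,t)`. -/
def coTop [AddCommGroup G] (t : TopologicalSpace G) :
    TopologicalSpace (charSubgroup (G := G) t) :=
  TopologicalSpace.generateFrom
    {S | ∃ (K : Set G) (U : Set Circle1), @IsCompact G t K ∧ IsOpen U ∧
      S = {χ : charSubgroup (G := G) t | ∀ x ∈ K, (χ : G →+ Circle1) x ∈ U}}

/-- The topology of pointwise convergence on the character group of `(G,t)`. -/
def ptTop [AddCommGroup G] (t : TopologicalSpace G) :
    TopologicalSpace (charSubgroup (G := G) t) :=
  TopologicalSpace.induced (fun (χ : charSubgroup (G := G) t) (g : G) => (χ : G →+ Circle1) g)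
    Pi.topologicalSpace

/-- Topological isomorphism between two groups carrying explicitly given topologies. -/
def IsTopAddIso {A B : Type*} [AddCommGroup A] [AddCommGroup B]
    (tA : TopologicalSpace A) (tB : TopologicalSpace B) : Prop :=
  ∃ e : A ≃+ B, @Continuous A B tA tB ⇑e ∧ @Continuous B A tB tA ⇑e.symm

/-- `U` is sequentially open for the topology `t`. -/
def SeqOpenIn (t : TopologicalSpace G) (U : Set G) : Prop :=
  ∀ (u : ℕ → G) (a : G), Filter.Tendsto u Filter.atTop (@nhds G t a) → a ∈ U →
    ∀ᶠ n in Filter.atTop, u n ∈ U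

/-- The sequential modification of `t`: the finest topology with the same convergent
sequences as `t`; its open sets are the `t`-sequentially open sets. -/
def seqMod (t : TopologicalSpace G) : TopologicalSpace G where
  IsOpen U := SeqOpenIn t U
  isOpen_univ := fun _u _a _hu _ha => Filter.Eventually.of_forall fun _ => trivial
  isOpen_inter := fun _U _V hU hV u a hu ha => (hU u a hu ha.1).and (hV u a hu ha.2)
  isOpen_sUnion := fun S hS u a hu ha => by
    obtain ⟨s, hsS, has⟩ := ha
    exact (hS s hsS u a hu has).mono fun n hn => ⟨s, hsS, hn⟩

/-- The `g`-sequential modification `s_g[t]`: the finest group topology coarser than the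
sequential modification of `t`. -/
def sg [AddCommGroup G] (t : TopologicalSpace G) : TopologicalSpace G :=
  sInf {τ : TopologicalSpace G | @IsTopologicalAddGroup G τ _ ∧ seqMod t ≤ τ}

/-- The `k`-modification of `t`: `U` is open iff `U ∩ K` is relatively open in `K` for every
`t`-compact `K`. -/
def kMod (t : TopologicalSpace G) : TopologicalSpace G :=
  ⨆ (K : Set G) (_ : @IsCompact G t K),
    TopologicalSpace.coinduced (Subtype.val : K → G) (TopologicalSpace.induced Subtype.val t)

/-- The topology `k_g[t]`: the supremum (finest) of all group topologies lying between `t`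
and the `k`-modification of `t`. -/
def kg [AddCommGroup G] (t : TopologicalSpace G) : TopologicalSpace G :=
  sInf {τ : TopologicalSpace G | @IsTopologicalAddGroup G τ _ ∧ kMod t ≤ τ ∧ τ ≤ t}

/-- Two topologies have the same convergent sequences. -/
def SameSequences (t s : TopologicalSpace G) : Prop :=
  ∀ (u : ℕ → G) (a : G),
    Filter.Tendsto u Filter.atTop (@nhds G t a) ↔ Filter.Tendsto u Filter.atTop (@nhds G s a)

/-- Two topologies have the same compact subsets. -/
def SameCompacts (t s : TopologicalSpace G) : Prop :=
  ∀ K : Set G, @IsCompact G t K ↔ @IsCompact G s K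

/-- A character is sequentially continuous for `t`. -/
def SeqContinuousChar [AddCommGroup G] (t : TopologicalSpace G) (f : G →+ Circle1) : Prop :=
  ∀ (u : ℕ → G) (a : G), Filter.Tendsto u Filter.atTop (@nhds G t a) →
    Filter.Tendsto (fun n => f (u n)) Filter.atTop (nhds (f a))

/-- A character is `k`-continuous for `t`: continuous on every `t`-compact subset. -/
def KContinuousChar [AddCommGroup G] (t : TopologicalSpace G) (f : G →+ Circle1) : Prop :=
  ∀ K : Set G, @IsCompact G t K → @ContinuousOn G Circle1 t _ ⇑f K

/-!
A homomorphism into a topological group is continuous on every `t`-compact set exactly when it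
is `k_g[t]`-continuous: for such a homomorphism, pulling the target topology back along it and
meeting with `t` gives a group topology between `t` and `kt`, which `k_g[t]` refines. Moreover
`k_g[t]` induces the topology of `t` on each `t`-compact set, so it has the same compact sets and
the same `k`-modification as `t`, whence `k_g[k_g[t]] = k_g[t]`. Since the Bohr topology only
depends on the character group, and a character is continuous for `t⁺` iff it is for `t`, the
cycle (1) ⇒ (2) ⇒ (3) ⇒ (4) ⇒ (1) follows; for the last step, a `k`-continuous character of `t`
is `k`-continuous for the finer `τ`, hence `τ`-continuous, hence `τ⁺ = t⁺`-continuous.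
-/

section KModification

variable {X : Type*}

theorem kMod_le (t : TopologicalSpace X) : kMod t ≤ t :=
  iSup₂_le fun _ _ => coinduced_le_iff_le_induced.mpr le_rfl

theorem continuous_kMod_iff (t : TopologicalSpace X) {Y : Type*} [TopologicalSpace Y]
    (f : X → Y) :
    Continuous[kMod t, _] f ↔ ∀ K : Set X, @IsCompact X t K → @ContinuousOn X Y t _ f K := by
  rw [kMod, continuous_iSup_dom]
  refine forall_congr' fun K => ?_
  rw [continuous_iSup_dom]
  refine forall_congr' fun _ => ?_
  rw [continuous_coinduced_dom, @continuousOn_iff_continuous_domRestrict X Y t _ f K]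
  rfl

theorem induced_val_kMod {t : TopologicalSpace X} {K : Set X} (hK : @IsCompact X t K) :
    TopologicalSpace.induced (Subtype.val : K → X) (kMod t) =
      TopologicalSpace.induced Subtype.val t := by
  refine le_antisymm (induced_mono (kMod_le t)) ?_
  rintro _ ⟨V, hV, rfl⟩
  rw [kMod, isOpen_iSup_iff] at hV
  exact isOpen_coinduced.mp (isOpen_iSup_iff.mp (hV K) hK)

theorem isCompact_of_le {s t : TopologicalSpace X} (h : s ≤ t) {K : Set X}
    (hK : @IsCompact X s K) : @IsCompact X t K := by
  simpa using @IsCompact.image X X s t K id hK (continuous_id_iff_le.mpr h)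

theorem isCompact_iff_of_induced_val_eq {s t : TopologicalSpace X} {K : Set X}
    (h : TopologicalSpace.induced (Subtype.val : K → X) s =
      TopologicalSpace.induced Subtype.val t) :
    @IsCompact X s K ↔ @IsCompact X t K := by
  rw [@isCompact_iff_compactSpace X s, @isCompact_iff_compactSpace X t]
  exact iff_of_eq (congrArg (@CompactSpace K) h)

theorem kMod_eq_of_le {s t : TopologicalSpace X} (hle : s ≤ t)
    (hind : ∀ K : Set X, @IsCompact X t K →
      TopologicalSpace.induced (Subtype.val : K → X) s = TopologicalSpace.induced Subtype.val t) :
    kMod s = kMod t := by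
  apply le_antisymm
  · refine iSup₂_le fun K hK => ?_
    have hKt : @IsCompact X t K := isCompact_of_le hle hK
    rw [hind K hKt]
    exact le_iSup₂_of_le K hKt le_rfl
  · refine iSup₂_le fun K hK => ?_
    rw [← hind K hK]
    exact le_iSup₂_of_le K ((isCompact_iff_of_induced_val_eq (hind K hK)).mpr hK) le_rfl

end KModification

section KgModification

variable [AddCommGroup G]

theorem kg_le {t : TopologicalSpace G} (ht : @IsTopologicalAddGroup G t _) : kg t ≤ t :=
  sInf_le ⟨ht, kMod_le t, le_rfl⟩

theorem kMod_le_kg (t : TopologicalSpace G) : kMod t ≤ kg t :=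
  le_sInf fun _ hτ => hτ.2.1

theorem isTopologicalAddGroup_kg (t : TopologicalSpace G) : @IsTopologicalAddGroup G (kg t) _ :=
  topologicalAddGroup_sInf fun _ hτ => hτ.1

theorem induced_val_kg {t : TopologicalSpace G} (ht : @IsTopologicalAddGroup G t _)
    {K : Set G} (hK : @IsCompact G t K) :
    TopologicalSpace.induced (Subtype.val : K → G) (kg t) =
      TopologicalSpace.induced Subtype.val t :=
  le_antisymm (induced_mono (kg_le ht)) (induced_val_kMod hK ▸ induced_mono (kMod_le_kg t))

theorem kMod_kg {t : TopologicalSpace G} (ht : @IsTopologicalAddGroup G t _) :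
    kMod (kg t) = kMod t :=
  kMod_eq_of_le (kg_le ht) fun _ hK => induced_val_kg ht hK

theorem kg_kg {t : TopologicalSpace G} (ht : @IsTopologicalAddGroup G t _) :
    kg (kg t) = kg t := by
  refine le_antisymm (sInf_le ⟨isTopologicalAddGroup_kg t, kMod_kg ht ▸ kMod_le_kg t, le_rfl⟩) ?_
  exact sInf_le_sInf fun τ ⟨hτ, hkτ, hτt⟩ =>
    ⟨hτ, (kMod_kg ht).symm ▸ hkτ, hτt.trans (kg_le ht)⟩

theorem continuous_kg_iff {t : TopologicalSpace G} (ht : @IsTopologicalAddGroup G t _)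
    {H : Type*} [AddGroup H] [TopologicalSpace H] [IsTopologicalAddGroup H] (f : G →+ H) :
    Continuous[kg t, _] f ↔ ∀ K : Set G, @IsCompact G t K → @ContinuousOn G H t _ f K := by
  rw [← continuous_kMod_iff]
  refine ⟨fun hf => continuous_le_dom (kMod_le_kg t) hf, fun hf => ?_⟩
  rw [continuous_iff_le_induced] at hf ⊢
  have hmem : t ⊓ TopologicalSpace.induced f ‹_› ∈
      {τ | @IsTopologicalAddGroup G τ _ ∧ kMod t ≤ τ ∧ τ ≤ t} :=
    ⟨topologicalAddGroup_inf ht (topologicalAddGroup_induced f), le_inf (kMod_le t) hf,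
      inf_le_left⟩
  exact (sInf_le hmem).trans inf_le_right

theorem kContinuousChar_iff_continuous_kg {t : TopologicalSpace G}
    (ht : @IsTopologicalAddGroup G t _) (χ : G →+ Circle1) :
    KContinuousChar t χ ↔ Continuous[kg t, _] χ :=
  (continuous_kg_iff ht χ).symm

theorem charSubgroup_le_kg {t : TopologicalSpace G} (ht : @IsTopologicalAddGroup G t _) :
    charSubgroup t ≤ charSubgroup (kg t) :=
  fun _ hχ => continuous_le_dom (kg_le ht) hχ

theorem KContinuousChar.mono {s t : TopologicalSpace G} (h : s ≤ t) {χ : G →+ Circle1}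
    (hχ : KContinuousChar t χ) : KContinuousChar s χ :=
  fun K hK => (hχ K (isCompact_of_le h hK)).mono_dom h

end KgModification

section Bohr

variable [AddCommGroup G]

theorem le_bohr (t : TopologicalSpace G) : t ≤ bohr t :=
  le_iInf₂ fun _ hχ => continuous_iff_le_induced.mp hχ

theorem continuous_bohr_iff (t : TopologicalSpace G) (χ : G →+ Circle1) :
    Continuous[bohr t, _] χ ↔ Continuous[t, _] χ :=
  ⟨continuous_le_dom (le_bohr t), fun hχ => continuous_iff_le_induced.mpr (iInf₂_le χ hχ)⟩

theorem bohr_eq_of_charSubgroup_eq {s t : TopologicalSpace G}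
    (h : charSubgroup s = charSubgroup t) : bohr s = bohr t :=
  iInf_congr fun χ => iInf_congr_Prop (SetLike.ext_iff.mp h χ) fun _ => rfl

end Bohr

/-- for a topological abelian group `(G,t)`, TFAE: every `k`-continuous
character is continuous; `(G,k_g[t])` has the same characters as `(G,t)`; `k_g[t]⁺ = t⁺`;
there is a `k_g`-group topology `τ ⊇ t` with `τ⁺ = t⁺`. -/
theorem stmt15 {G : Type*} [AddCommGroup G] (t : TopologicalSpace G)
    (hgrp : @IsTopologicalAddGroup G t _) :
    [∀ f : G →+ Circle1, KContinuousChar t f → @Continuous G Circle1 t _ ⇑f,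
     charSubgroup (kg t) = charSubgroup t,
     bohr (kg t) = bohr t,
     ∃ τ : TopologicalSpace G, @IsTopologicalAddGroup G τ _ ∧ kg τ = τ ∧ τ ≤ t ∧
       bohr τ = bohr t].TFAE := by
  tfae_have 1 → 2 := fun h1 => le_antisymm
    (fun χ hχ => h1 χ ((kContinuousChar_iff_continuous_kg hgrp χ).mpr hχ))
    (charSubgroup_le_kg hgrp)
  tfae_have 2 → 3 := bohr_eq_of_charSubgroup_eq
  tfae_have 3 → 4 := fun h3 => ⟨kg t, isTopologicalAddGroup_kg t, kg_kg hgrp, kg_le hgrp, h3⟩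
  tfae_have 4 → 1 := by
    rintro ⟨τ, hτ, hkg, hτt, hbohr⟩ χ hχ
    have hχτ : Continuous[τ, _] χ :=
      hkg ▸ (kContinuousChar_iff_continuous_kg hτ χ).mp (hχ.mono hτt)
    rwa [← continuous_bohr_iff, ← hbohr, continuous_bohr_iff]
  tfae_finish

end
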